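/- arXiv:2410.05207 — 7 statements merged into one kernel-verified Lean document; each statement's English description precedes it below -/
import Mathlib

section
/- For all nonnegative integers n, the Bernoulli polynomial satisfies B_n(X) = B_n + sum_{k=1}^{n} (n/k) * S(n-1, k-1) * X^(k), where X^(k) denotes the falling factorial X(X-1)...(X-k+1). -/
open Finset

/-- Stirling numbers of the second kind. -/
def stirling2 : ℕ → ℕ → ℕ
  | 0, 0 => 1
  | 0, _ + 1 => 0
  | _ + 1, 0 => 0
  | n + 1, k + 1 => stirling2 n k + (k + 1) * stirling2 n (k + 1)

/-- Signed Stirling numbers of the first kind. -/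
def stirling1 : ℕ → ℕ → ℤ
  | 0, 0 => 1
  | 0, _ + 1 => 0
  | n + 1, 0 => -(n : ℤ) * stirling1 n 0
  | n + 1, k + 1 => stirling1 n k - (n : ℤ) * stirling1 n (k + 1)

/-- Bernoulli numbers of the second kind: `∫₀¹ x(x-1)⋯(x-n+1) dx`. -/
noncomputable def bernoulliStar (n : ℕ) : ℝ :=
  ∫ x in (0:ℝ)..1, (descPochhammer ℝ n).eval x

lemma stirling2_eq_zero_of_lt : ∀ {n k : ℕ}, n < k → stirling2 n k = 0
  | 0, 0, h => absurd h (lt_irrefl 0)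
  | 0, k + 1, _ => rfl
  | n + 1, 0, h => absurd h (Nat.not_lt_zero _).elim
  | n + 1, k + 1, h => by
      rw [stirling2, stirling2_eq_zero_of_lt (Nat.lt_of_succ_lt_succ h),
        stirling2_eq_zero_of_lt (Nat.lt_of_succ_lt <| Nat.lt_of_succ_lt_succ
          (Nat.succ_lt_succ h))]
      ring

lemma descPochhammer_eval_add_one (k : ℕ) (x : ℚ) :
    (descPochhammer ℚ (k + 1)).eval (x + 1) = (x + 1) * (descPochhammer ℚ k).eval x := by
  rw [descPochhammer_succ_left]
  simp [Polynomial.eval_comp]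

lemma pow_eq_sum_stirling2 (n : ℕ) (x : ℚ) :
    x ^ n = ∑ k ∈ range (n + 1), (stirling2 n k : ℚ) * (descPochhammer ℚ k).eval x := by
  induction n with
  | zero => simp [stirling2]
  | succ n ih =>
    have hmul : ∀ k : ℕ, x * (descPochhammer ℚ k).eval x =
        (descPochhammer ℚ (k + 1)).eval x + (k : ℚ) * (descPochhammer ℚ k).eval x := by
      intro k
      rw [descPochhammer_succ_right]
      simp
      ring
    calc x ^ (n + 1) = x * x ^ n := by ring
      _ = ∑ k ∈ range (n + 1), (stirling2 n k : ℚ) * (x * (descPochhammer ℚ k).eval x) := by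
          rw [ih, Finset.mul_sum]; apply Finset.sum_congr rfl; intro k _; ring
      _ = ∑ k ∈ range (n + 1), ((stirling2 n k : ℚ) * (descPochhammer ℚ (k + 1)).eval x
            + (stirling2 n k : ℚ) * ((k : ℚ) * (descPochhammer ℚ k).eval x)) := by
          apply Finset.sum_congr rfl; intro k _; rw [hmul]; ring
      _ = (∑ k ∈ range (n + 1), (stirling2 n k : ℚ) * (descPochhammer ℚ (k + 1)).eval x)
            + ∑ k ∈ range (n + 1), (k : ℚ) * (stirling2 n k : ℚ)
              * (descPochhammer ℚ k).eval x := by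
          rw [← Finset.sum_add_distrib]; apply Finset.sum_congr rfl; intro k _; ring
      _ = ∑ k ∈ range (n + 2), (stirling2 (n + 1) k : ℚ) * (descPochhammer ℚ k).eval x := by
          rw [Finset.sum_range_succ' (fun k => (stirling2 (n + 1) k : ℚ)
            * (descPochhammer ℚ k).eval x)]
          have h0 : (stirling2 (n + 1) 0 : ℚ) * (descPochhammer ℚ 0).eval x = 0 := by
            simp [stirling2]
          rw [h0, add_zero]
          have hsecond : ∑ k ∈ range (n + 1), (k : ℚ) * (stirling2 n k : ℚ)
              * (descPochhammer ℚ k).eval x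
              = ∑ k ∈ range (n + 1), ((k + 1 : ℕ) : ℚ) * (stirling2 n (k + 1) : ℚ)
                * (descPochhammer ℚ (k + 1)).eval x := by
            rw [Finset.sum_range_succ'
              (fun k => (k : ℚ) * (stirling2 n k : ℚ) * (descPochhammer ℚ k).eval x)]
            rw [Finset.sum_range_succ (fun k => ((k + 1 : ℕ) : ℚ) * (stirling2 n (k + 1) : ℚ)
              * (descPochhammer ℚ (k + 1)).eval x)]
            simp [stirling2_eq_zero_of_lt (Nat.lt_succ_self n)]
          rw [hsecond, ← Finset.sum_add_distrib]
          apply Finset.sum_congr rfl; intro k _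
          show _ = (stirling2 (n + 1) (k + 1) : ℚ) * _
          rw [stirling2]
          push_cast
          ring

theorem stmt0 (n : ℕ) :
    Polynomial.bernoulli n = Polynomial.C (bernoulli n) +
      ∑ k ∈ Finset.Icc 1 n,
        Polynomial.C ((n : ℚ) / k * stirling2 (n - 1) (k - 1)) * descPochhammer ℚ k := by
  apply Polynomial.eq_of_infinite_eval_eq
  apply Set.infinite_of_injective_forall_mem (f := (Nat.cast : ℕ → ℚ)) Nat.cast_injective
  intro m
  show Polynomial.eval (m : ℚ) _ = Polynomial.eval (m : ℚ) _
  induction m with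
  | zero =>
    rw [Nat.cast_zero, Polynomial.bernoulli_eval_zero]
    rw [Polynomial.eval_add, Polynomial.eval_C, Polynomial.eval_finset_sum]
    have : ∀ k ∈ Finset.Icc 1 n, Polynomial.eval 0
        (Polynomial.C ((n : ℚ) / k * stirling2 (n - 1) (k - 1)) * descPochhammer ℚ k) = 0 := by
      intro k hk
      have hk1 : k ≠ 0 := by have := (Finset.mem_Icc.mp hk).1; omega
      rw [Polynomial.eval_mul, descPochhammer_eval_zero, if_neg hk1, mul_zero]
    rw [Finset.sum_congr rfl this, Finset.sum_const_zero, add_zero]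
  | succ m ih =>
    have hB : (Polynomial.bernoulli n).eval ((m + 1 : ℕ) : ℚ)
        = (Polynomial.bernoulli n).eval (m : ℚ) + n * (m : ℚ) ^ (n - 1) := by
      have := Polynomial.bernoulli_eval_one_add n (m : ℚ)
      rw [add_comm 1 (m : ℚ)] at this
      push_cast
      exact this
    rw [hB, ih]
    rw [Polynomial.eval_add, Polynomial.eval_add, Polynomial.eval_C, Polynomial.eval_C,
      Polynomial.eval_finset_sum, Polynomial.eval_finset_sum]
    rcases n with _ | d
    · simp
    -- n = d + 1
    have hIcc : ∀ x : ℚ, ∑ k ∈ Finset.Icc 1 (d + 1),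
        Polynomial.eval x (Polynomial.C (((d + 1 : ℕ) : ℚ) / k * stirling2 (d + 1 - 1) (k - 1))
          * descPochhammer ℚ k)
        = ∑ j ∈ range (d + 1), ((d + 1 : ℕ) : ℚ) / (j + 1) * (stirling2 d j : ℚ)
            * (descPochhammer ℚ (j + 1)).eval x := by
      intro x
      rw [show Finset.Icc 1 (d + 1) = Finset.Ico 1 (d + 2) by rfl,
        Finset.sum_Ico_eq_sum_range]
      simp only [Nat.add_sub_cancel, Polynomial.eval_mul, Polynomial.eval_C]
      apply Finset.sum_congr (by congr 1) (fun j _ => by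
        rw [show 1 + j - 1 = j by omega]
        push_cast
        ring_nf)
    rw [hIcc, hIcc]
    have hstep : ∀ j ∈ range (d + 1), ((d + 1 : ℕ) : ℚ) / (j + 1) * (stirling2 d j : ℚ)
        * (descPochhammer ℚ (j + 1)).eval (((m + 1 : ℕ) : ℚ))
        = ((d + 1 : ℕ) : ℚ) / (j + 1) * (stirling2 d j : ℚ)
          * (descPochhammer ℚ (j + 1)).eval ((m : ℚ))
          + ((d + 1 : ℕ) : ℚ) * (stirling2 d j : ℚ) * (descPochhammer ℚ j).eval (m : ℚ) := by
      intro j _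
      have h1 : (descPochhammer ℚ (j + 1)).eval (((m + 1 : ℕ) : ℚ))
          = ((m : ℚ) + 1) * (descPochhammer ℚ j).eval (m : ℚ) := by
        rw [show ((m + 1 : ℕ) : ℚ) = (m : ℚ) + 1 by push_cast; ring]
        exact descPochhammer_eval_add_one j (m : ℚ)
      have h2 : (descPochhammer ℚ (j + 1)).eval ((m : ℚ))
          = (descPochhammer ℚ j).eval (m : ℚ) * ((m : ℚ) - j) := by
        rw [descPochhammer_succ_right]
        simp
      have hj : ((j : ℚ) + 1) ≠ 0 := by positivity
      rw [h1, h2]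
      field_simp
      ring
    rw [Finset.sum_congr rfl hstep, Finset.sum_add_distrib]
    have : ∑ j ∈ range (d + 1), ((d + 1 : ℕ) : ℚ) * (stirling2 d j : ℚ)
        * (descPochhammer ℚ j).eval (m : ℚ)
        = ((d + 1 : ℕ) : ℚ) * ∑ j ∈ range (d + 1), (stirling2 d j : ℚ)
            * (descPochhammer ℚ j).eval (m : ℚ) := by
      rw [Finset.mul_sum]; apply Finset.sum_congr rfl; intro j _; ring
    rw [this, ← pow_eq_sum_stirling2]
    push_cast
    ring
end

section
/- For all positive integers n, the Bernoulli number satisfies B_n = - sum_{k=1}^{n} (n/k) * S(n-1, k-1) * B_k^*, where B_k^* is the k-th Bernoulli number of the second kind. -/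
/-! Expanding `x ^ m = ∑ j, S(m, j) (x)_j` and using `Δ (x)_(j+1) = (j + 1) (x)_j` shows that
`powerSumPoly m = ∑ j, S(m, j) / (j + 1) • (x)_(j+1)` is the discrete antiderivative of `x ^ m`
vanishing at `0`, i.e. `powerSumPoly m` evaluated at `N` is `∑ k < N, k ^ m`. By Faulhaber's
formula, `(m + 1) • powerSumPoly m` and `B_(m+1)(x) - B_(m+1)` then agree on all of `ℕ`, so they
are the same polynomial. Integrating this identity over `[0, 1]`, where the Bernoulli polynomial
integrates to `0` and `(x)_(j+1)` integrates to `B*_(j+1)`, gives the formula. -/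

open Finset

section

open Polynomial

theorem stirling2_eq_stirlingSecond : ∀ n k : ℕ, stirling2 n k = n.stirlingSecond k
  | 0, 0 | 0, _ + 1 | _ + 1, 0 => rfl
  | n + 1, k + 1 => by
    rw [stirling2, Nat.stirlingSecond_succ_succ, stirling2_eq_stirlingSecond n k,
      stirling2_eq_stirlingSecond n (k + 1), add_comm]

section descPochhammer

variable {R : Type*} [CommRing R]

theorem X_mul_descPochhammer (j : ℕ) :
    X * descPochhammer R j = descPochhammer R (j + 1) + (j : R[X]) * descPochhammer R j := by
  rw [descPochhammer_succ_right]
  ring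

theorem X_pow_eq_sum_stirlingSecond_mul_descPochhammer (m : ℕ) :
    (X : R[X]) ^ m = ∑ j ∈ range (m + 1), (m.stirlingSecond j : R[X]) * descPochhammer R j := by
  induction m with
  | zero => simp
  | succ m ih =>
    have h_shift : ∑ j ∈ range (m + 1), (m.stirlingSecond j * j : R[X]) * descPochhammer R j =
        ∑ j ∈ range (m + 1), (m.stirlingSecond (j + 1) * (j + 1 : ℕ) : R[X]) *
          descPochhammer R (j + 1) := by
      rw [sum_range_succ', sum_range_succ _ m, Nat.stirlingSecond_eq_zero_of_lt m.lt_succ_self]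
      simp
    calc (X : R[X]) ^ (m + 1)
        = ∑ j ∈ range (m + 1), (m.stirlingSecond j : R[X]) * descPochhammer R (j + 1) +
          ∑ j ∈ range (m + 1), (m.stirlingSecond j * j : R[X]) * descPochhammer R j := by
          simp only [pow_succ', ih, mul_sum, ← sum_add_distrib]
          refine sum_congr rfl fun j _ => ?_
          rw [mul_left_comm, X_mul_descPochhammer]
          ring
      _ = ∑ j ∈ range (m + 1 + 1), ((m + 1).stirlingSecond j : R[X]) * descPochhammer R j := by
          rw [h_shift, sum_range_succ' _ (m + 1), Nat.stirlingSecond_succ_zero, ← sum_add_distrib]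
          simp only [Nat.stirlingSecond_succ_succ]
          push_cast
          simp only [zero_mul, add_zero]
          exact sum_congr rfl fun j _ => by ring

theorem descPochhammer_succ_eval_add_one_sub (j : ℕ) (x : R) :
    (descPochhammer R (j + 1)).eval (x + 1) - (descPochhammer R (j + 1)).eval x =
      (j + 1) * (descPochhammer R j).eval x := by
  nth_rw 1 [descPochhammer_succ_left]
  rw [descPochhammer_succ_eval]
  simp only [eval_mul, eval_X, eval_comp, eval_sub, eval_one, add_sub_cancel_right]
  ring

end descPochhammer

theorem aeval_descPochhammer {R A : Type*} [CommRing R] [Ring A] [Algebra R A] (n : ℕ) (x : A) :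
    aeval x (descPochhammer R n) = (descPochhammer A n).eval x := by
  rw [aeval_def, eval₂_eq_eval_map, descPochhammer_map]

noncomputable def powerSumPoly (m : ℕ) : ℚ[X] :=
  ∑ j ∈ range (m + 1), C ((m.stirlingSecond j : ℚ) / (j + 1)) * descPochhammer ℚ (j + 1)

theorem powerSumPoly_eval_add_one_sub (m : ℕ) (x : ℚ) :
    (powerSumPoly m).eval (x + 1) - (powerSumPoly m).eval x = x ^ m := by
  have h := congrArg (eval x) (X_pow_eq_sum_stirlingSecond_mul_descPochhammer (R := ℚ) m)
  simp only [eval_pow, eval_X, eval_finsetSum, eval_mul, eval_natCast] at h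
  simp only [powerSumPoly, eval_finsetSum, eval_mul, eval_C, ← sum_sub_distrib, ← mul_sub,
    descPochhammer_succ_eval_add_one_sub, h]
  refine sum_congr rfl fun j _ => ?_
  field_simp

theorem powerSumPoly_eval_natCast (m N : ℕ) :
    (powerSumPoly m).eval (N : ℚ) = ∑ k ∈ range N, (k : ℚ) ^ m := by
  simp_rw [← powerSumPoly_eval_add_one_sub, ← Nat.cast_succ]
  rw [sum_range_sub (fun k : ℕ => (powerSumPoly m).eval (k : ℚ))]
  simp [powerSumPoly, eval_finsetSum]

theorem succ_mul_powerSumPoly (m : ℕ) :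
    (m + 1 : ℚ[X]) * powerSumPoly m =
      Polynomial.bernoulli (m + 1) - C (_root_.bernoulli (m + 1)) := by
  refine eq_of_infinite_eval_eq _ _
    (Set.infinite_of_injective_forall_mem Nat.cast_injective fun N => ?_)
  simpa [powerSumPoly_eval_natCast] using sum_range_pow_eq_bernoulli_sub N m

theorem integral_aeval_bernoulli {n : ℕ} (hn : n ≠ 0) :
    ∫ x in (0 : ℝ)..1, aeval x (Polynomial.bernoulli n) = 0 := by
  have h_ftc := intervalIntegral.integral_eq_sub_of_hasDerivAt
    (fun x _ => (Polynomial.bernoulli (n + 1)).hasDerivAt_aeval x)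
    ((Polynomial.bernoulli (n + 1)).derivative.continuous_aeval.intervalIntegrable (0 : ℝ) 1)
  have h_ends :
      (Polynomial.bernoulli (n + 1)).eval 1 = (Polynomial.bernoulli (n + 1)).eval 0 := by
    rw [bernoulli_eval_one, bernoulli_eval_zero, bernoulli_eq_bernoulli'_of_ne_one (by omega)]
  have h_ends_real := congrArg (algebraMap ℚ ℝ) h_ends
  rw [← aeval_algebraMap_apply_eq_algebraMap_eval, ← aeval_algebraMap_apply_eq_algebraMap_eval,
    map_one, map_zero] at h_ends_real
  simp only [derivative_bernoulli_add_one, map_mul, map_add, map_natCast, map_one,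
    intervalIntegral.integral_const_mul, h_ends_real, sub_self] at h_ftc
  exact (mul_eq_zero.mp h_ftc).resolve_left (by positivity)

theorem integral_aeval_powerSumPoly (m : ℕ) :
    ∫ x in (0 : ℝ)..1, aeval x (powerSumPoly m) =
      ∑ j ∈ range (m + 1), (m.stirlingSecond j : ℝ) / (j + 1) * bernoulliStar (j + 1) := by
  simp only [powerSumPoly, map_sum, map_mul, aeval_C, aeval_descPochhammer]
  rw [intervalIntegral.integral_finsetSum]
  · simp [intervalIntegral.integral_const_mul, bernoulliStar]
  · intro j _
    exact (continuous_const.mul (descPochhammer ℝ (j + 1)).continuous).intervalIntegrable _ _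

theorem bernoulli_succ_eq_neg_sum_stirlingSecond_mul_bernoulliStar (m : ℕ) :
    (_root_.bernoulli (m + 1) : ℝ) = -((m + 1) *
      ∑ j ∈ range (m + 1), (m.stirlingSecond j : ℝ) / (j + 1) * bernoulliStar (j + 1)) := by
  have h := congrArg (fun p => ∫ x in (0 : ℝ)..1, aeval x p) (succ_mul_powerSumPoly m)
  simp only [map_mul, map_sub, map_add, map_natCast, map_one, aeval_C,
    intervalIntegral.integral_const_mul, integral_aeval_powerSumPoly] at h
  rw [intervalIntegral.integral_sub
      ((Polynomial.bernoulli _).continuous_aeval.intervalIntegrable _ _) intervalIntegrable_const,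
    integral_aeval_bernoulli m.succ_ne_zero, intervalIntegral.integral_const] at h
  simp only [sub_zero, eq_ratCast, smul_eq_mul, one_mul, zero_sub] at h
  linarith

end

theorem stmt1 (n : ℕ) (hn : 0 < n) :
    (bernoulli n : ℝ) =
      - ∑ k ∈ Finset.Icc 1 n, (n : ℝ) / k * (stirling2 (n - 1) (k - 1) : ℝ) * bernoulliStar k := by
  obtain ⟨m, rfl⟩ := Nat.exists_eq_add_of_lt hn
  rw [zero_add, bernoulli_succ_eq_neg_sum_stirlingSecond_mul_bernoulliStar, mul_sum,
    ← Ico_add_one_right_eq_Icc, sum_Ico_eq_sum_range, add_tsub_cancel_right]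
  congr 1
  refine sum_congr rfl fun j _ => ?_
  rw [add_comm 1 j, add_tsub_cancel_right, add_tsub_cancel_right, stirling2_eq_stirlingSecond]
  push_cast
  ring
end

section
/- For all positive integers n, the n-th Bernoulli number of the second kind satisfies B_n^* = - sum_{k=1}^{n} (n/k) * s(n-1, k-1) * B_k, where s(n,k) are the (signed) Stirling numbers of the first kind. -/
open Finset

/-!
Let `L` be the linear functional `Xᵏ ↦ Bₖ`, `A` the antiderivative vanishing at `0`, and
`Δp = p(X + 1) - p`, so that `L ∘ A` pairs the coefficients of `p` with `B_{k+1}/(k+1)`.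
Because `∑_{k<N} C(N,k) B_k = [N = 1]`, a check on monomials gives `L(A(Δp)) = p(0) - ∫₀¹ p`.
For `p = (x)ₙ` we have `Δp = n·(x)ₙ₋₁` and `p(0) = 0`, hence `n·L(A((x)ₙ₋₁)) = -Bₙ*`, which is the
claimed identity once `(x)ₙ₋₁` is expanded in Stirling numbers of the first kind.
-/

theorem sum_range_choose_mul_bernoulli_succ_div (j : ℕ) :
    ∑ i ∈ range (j + 1), (j.choose i : ℚ) * (bernoulli (i + 1) / (i + 1)) =
      bernoulli (j + 1) / (j + 1) + 0 ^ j - 1 / (j + 1) := by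
  have hchoose (i : ℕ) : (j.choose i : ℚ) / (i + 1) = ((j + 1).choose (i + 1) : ℚ) / (j + 1) := by
    rw [div_eq_div_iff (by positivity) (by positivity), mul_comm]
    exact_mod_cast (Nat.add_one_mul_choose_eq j i)
  have hsum := sum_bernoulli (j + 1)
  rw [sum_range_succ'] at hsum
  calc _ = (∑ i ∈ range (j + 1), ((j + 1).choose (i + 1) : ℚ) * bernoulli (i + 1)) / (j + 1) := by
        rw [sum_div]
        refine sum_congr rfl fun i _ => ?_
        rw [mul_div_left_comm, hchoose]
        ring
    _ = _ := by
        rw [sum_range_succ]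
        rcases j with _ | j
        · simp
        · simp only [Nat.choose_self, Nat.choose_zero_right, Nat.cast_one, one_mul,
            bernoulli_zero, if_neg (by omega : j + 1 + 1 ≠ 1)] at hsum ⊢
          field_simp
          linear_combination hsum

namespace Polynomial

theorem coeff_descPochhammer_eq_stirling1 {R : Type*} [CommRing R] (n k : ℕ) :
    (descPochhammer R n).coeff k = (stirling1 n k : R) := by
  induction n generalizing k with
  | zero => cases k <;> simp [stirling1, coeff_one]
  | succ n ih =>
    rw [descPochhammer_succ_right, mul_sub, coeff_sub, ← C_eq_natCast, coeff_mul_C]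
    cases k with
    | zero => simp [stirling1, ih, mul_comm]
    | succ k => simp [stirling1, coeff_mul_X, ih]; ring

theorem taylor_one_descPochhammer_succ_sub {R : Type*} [CommRing R] (n : ℕ) :
    taylor 1 (descPochhammer R (n + 1)) - descPochhammer R (n + 1) =
      (n + 1 : R) • descPochhammer R n := by
  have h : taylor 1 (descPochhammer R (n + 1)) = (X + 1) * descPochhammer R n := by
    rw [taylor_apply, descPochhammer_succ_left, mul_comp, X_comp, comp_assoc, sub_comp, X_comp,
      one_comp, map_one, add_sub_cancel_right, comp_X]
  rw [h, descPochhammer_succ_right, smul_eq_C_mul]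
  simp only [map_add, map_natCast, map_one]
  ring

def coeffPairing {R : Type*} [CommSemiring R] (c : ℕ → R) : R[X] →ₗ[R] R :=
  lsum fun k => c k • LinearMap.id

section coeffPairing

variable {R : Type*} [CommSemiring R] (c : ℕ → R)

theorem coeffPairing_X_pow (k : ℕ) : coeffPairing c (X ^ k) = c k := by
  simp [coeffPairing, ← monomial_one_right_eq_X_pow]

theorem coeffPairing_eq_sum_range {p : R[X]} {N : ℕ} (hN : p.natDegree < N) :
    coeffPairing c p = ∑ k ∈ range N, p.coeff k * c k := by
  rw [coeffPairing, lsum_apply, sum_over_range' _ (by simp) N hN]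
  simp [mul_comm]

end coeffPairing

theorem coeffPairing_bernoulli_taylor_one_sub {K : Type*} [Field K] [CharZero K] (p : K[X]) :
    coeffPairing (fun k => (_root_.bernoulli (k + 1) : K) / (k + 1)) (taylor 1 p - p) =
      p.eval 0 - coeffPairing (fun k => ((k : K) + 1)⁻¹) p := by
  suffices coeffPairing (fun k => (_root_.bernoulli (k + 1) : K) / (k + 1)) ∘ₗ
      (taylor 1 - LinearMap.id) = leval 0 - coeffPairing (fun k => ((k : K) + 1)⁻¹) from
    LinearMap.congr_fun this p
  refine lhom_ext' fun j => LinearMap.ext_ring ?_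
  simp only [LinearMap.comp_apply, LinearMap.sub_apply, LinearMap.id_apply, map_sub,
    monomial_one_right_eq_X_pow, taylor_X_pow, map_one, leval_apply, eval_pow, eval_X]
  rw [ coeffPairing_X_pow, coeffPairing_X_pow,
    coeffPairing_eq_sum_range _ (N := j + 1) (by rw [← C_1, natDegree_pow_X_add_C]; omega)]
  have h := congrArg (Rat.cast : ℚ → K) (sum_range_choose_mul_bernoulli_succ_div j)
  push_cast [coeff_X_add_one_pow] at h ⊢
  linear_combination h

theorem integral_eval_zero_one (p : ℝ[X]) :
    ∫ x in (0 : ℝ)..1, p.eval x = coeffPairing (fun k => ((k : ℝ) + 1)⁻¹) p := by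
  induction p using Polynomial.induction_on' with
  | add p q hp hq =>
    rw [map_add, ← hp, ← hq, ← intervalIntegral.integral_add
      (p.continuous.intervalIntegrable 0 1) (q.continuous.intervalIntegrable 0 1)]
    simp only [eval_add]
  | monomial k a => simp [coeffPairing, div_eq_mul_inv, mul_comm]

end Polynomial

theorem stmt2 (n : ℕ) (hn : 0 < n) :
    bernoulliStar n =
      - ∑ k ∈ Finset.Icc 1 n, (n : ℝ) / k * (stirling1 (n - 1) (k - 1) : ℝ) * (bernoulli k : ℝ) := by
  obtain ⟨m, rfl⟩ : ∃ m, n = m + 1 := ⟨n - 1, by omega⟩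
  have key : (m + 1 : ℝ) * ∑ k ∈ range (m + 1),
      (stirling1 m k : ℝ) * ((bernoulli (k + 1) : ℝ) / (k + 1)) = -bernoulliStar (m + 1) := by
    have h := Polynomial.coeffPairing_bernoulli_taylor_one_sub (descPochhammer ℝ (m + 1))
    rw [Polynomial.taylor_one_descPochhammer_succ_sub, map_smul,
      Polynomial.coeffPairing_eq_sum_range _ (N := m + 1) (by rw [descPochhammer_natDegree]; omega),
      descPochhammer_eval_zero, if_neg m.succ_ne_zero, zero_sub,
      ← Polynomial.integral_eval_zero_one] at h
    simpa only [Polynomial.coeff_descPochhammer_eq_stirling1, smul_eq_mul, bernoulliStar] using h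
  rw [neg_eq_iff_eq_neg.mp key.symm, mul_sum, ← Finset.Ico_add_one_right_eq_Icc,
    Finset.sum_Ico_eq_sum_range, add_tsub_cancel_right]
  refine congrArg _ (sum_congr rfl fun k _ => ?_)
  rw [add_comm 1 k, add_tsub_cancel_right]
  push_cast
  ring
end

section
/- For all nonnegative integers n, the falling factorial satisfies X^(n) = B_n^* + sum_{k=1}^{n} (n/k) * s(n-1, k-1) * B_k(X), as an identity of polynomials. -/
open Finset

/-!
Both sides have the same forward difference: `B_k(1 + X) - B_k(X) = k X^(k-1)` and
`(1 + X)^(n) - X^(n) = n X^(n-1) = ∑ n s(n-1, k-1) X^(k-1)`. Their difference is therefore a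
polynomial invariant under `X ↦ 1 + X`, hence constant, and integrating over `[0, 1]`, where every
`B_k` with `k ≥ 1` has mean zero, identifies the constant with `∫₀¹ X^(n) = B_n^*`.
-/

open Polynomial

theorem stirling1_eq_zero_of_lt : ∀ {n k : ℕ}, n < k → stirling1 n k = 0
  | 0, _ + 1, _ => rfl
  | n + 1, k + 1, h => by
    rw [stirling1, stirling1_eq_zero_of_lt (by omega : n < k),
      stirling1_eq_zero_of_lt (by omega : n < k + 1), mul_zero, sub_zero]

theorem descPochhammer_eq_sum_stirling1 (R : Type*) [CommRing R] (n : ℕ) :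
    descPochhammer R n = ∑ k ∈ range (n + 1), C (stirling1 n k : R) * X ^ k := by
  induction n with
  | zero => simp [stirling1]
  | succ n ih =>
    set S := ∑ k ∈ range (n + 1), C (stirling1 n k : R) * X ^ k
    have hshift : S = ∑ k ∈ range (n + 1), C (stirling1 n (k + 1) : R) * X ^ (k + 1) +
        C (stirling1 n 0 : R) := by
      have htop : (stirling1 n (n + 1) : R) = 0 := by
        simp [stirling1_eq_zero_of_lt (Nat.lt_succ_self n)]
      -- pad `S` with the vanishing coefficient `s(n, n+1)`, then split off the constant term
      rw [← add_zero S, ← zero_mul (X ^ (n + 1)), ← C_0, ← htop, ← sum_range_succ,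
        sum_range_succ', pow_zero, mul_one]
    have hX : ∑ k ∈ range (n + 1), C (stirling1 n k : R) * X ^ (k + 1) = S * X := by
      simp only [S, sum_mul, pow_succ, mul_assoc]
    rw [descPochhammer_succ_right, ih, sum_range_succ' _ (n + 1)]
    simp only [stirling1, Int.cast_sub, Int.cast_mul, Int.cast_neg, Int.cast_natCast, C_sub, C_mul,
      C_neg, C_eq_natCast, sub_mul, sum_sub_distrib, mul_assoc, ← mul_sum, hX]
    linear_combination (-(n : R[X])) * hshift

theorem descPochhammer_comp_one_add_X (R : Type*) [CommRing R] (n : ℕ) :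
    (descPochhammer R n).comp (1 + X) = descPochhammer R n + n * descPochhammer R (n - 1) := by
  cases n with
  | zero => simp
  | succ n =>
    rw [descPochhammer_succ_left, mul_comp, X_comp, comp_assoc, ← descPochhammer_succ_left,
      descPochhammer_succ_right]
    simp only [sub_comp, X_comp, one_comp, add_sub_cancel_left, comp_X, Nat.add_sub_cancel]
    push_cast
    ring

theorem eq_C_eval_zero_of_comp_one_add_X {R : Type*} [CommRing R] [IsDomain R] [CharZero R]
    {p : R[X]} (h : p.comp (1 + X) = p) : p = C (p.eval 0) := by
  have hnat : ∀ m : ℕ, p.eval (m : R) = p.eval 0 := by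
    intro m
    induction m with
    | zero => simp
    | succ m ih => simpa [add_comm, ih] using congrArg (eval (m : R)) h
  refine eq_of_infinite_eval_eq _ _ ((Set.infinite_range_of_injective Nat.cast_injective).mono ?_)
  rintro _ ⟨m, rfl⟩
  simp [hnat m]

theorem integral_eval_sum_C_mul_bernoulli {s : Finset ℕ} (hs : 0 ∉ s) (a : ℕ → ℝ) :
    ∫ x in (0 : ℝ)..1,
      (∑ k ∈ s, C (a k) * (Polynomial.bernoulli k).map (algebraMap ℚ ℝ)).eval x = 0 := by
  simp only [eval_finsetSum, eval_mul, eval_C]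
  rw [intervalIntegral.integral_finsetSum fun k _ =>
    ((Polynomial.continuous _).const_mul (a k)).intervalIntegrable 0 1]
  refine sum_eq_zero fun k hk => ?_
  rw [intervalIntegral.integral_const_mul]
  exact mul_eq_zero_of_right _ (integral_bernoulliFun_eq_zero (ne_of_mem_of_not_mem hk hs))

theorem sum_Icc_div_mul_stirling1_mul_X_pow (n : ℕ) :
    ∑ k ∈ Icc 1 n, C ((n : ℝ) / k * (stirling1 (n - 1) (k - 1) : ℝ)) * ((k : ℝ[X]) * X ^ (k - 1)) =
      n * descPochhammer ℝ (n - 1) := by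
  cases n with
  | zero => simp
  | succ n =>
    rw [descPochhammer_eq_sum_stirling1, mul_sum, ← Ico_add_one_right_eq_Icc, sum_Ico_eq_sum_range]
    refine sum_congr rfl fun k _ => ?_
    simp only [Nat.add_sub_cancel, add_tsub_cancel_left, ← C_eq_natCast, ← mul_assoc, ← C_mul]
    congr 2
    push_cast
    field_simp

theorem stmt3 (n : ℕ) :
    descPochhammer ℝ n = Polynomial.C (bernoulliStar n) +
      ∑ k ∈ Finset.Icc 1 n,
        Polynomial.C ((n : ℝ) / k * (stirling1 (n - 1) (k - 1) : ℝ)) *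
          (Polynomial.bernoulli k).map (algebraMap ℚ ℝ) := by
  set Q := ∑ k ∈ Icc 1 n, C ((n : ℝ) / k * (stirling1 (n - 1) (k - 1) : ℝ)) *
    (Polynomial.bernoulli k).map (algebraMap ℚ ℝ)
  have hB : ∀ k, ((Polynomial.bernoulli k).map (algebraMap ℚ ℝ)).comp (1 + X) =
      (Polynomial.bernoulli k).map (algebraMap ℚ ℝ) + (k : ℝ[X]) * X ^ (k - 1) := fun k => by
    simpa [map_comp] using congrArg (map (algebraMap ℚ ℝ)) (bernoulli_comp_one_add_X k)
  have hQ : Q.comp (1 + X) = Q + n * descPochhammer ℝ (n - 1) := by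
    simp only [Q, Polynomial.sum_comp, mul_comp, C_comp, hB, mul_add, sum_add_distrib,
      sum_Icc_div_mul_stirling1_mul_X_pow]
  have hperiodic : (descPochhammer ℝ n - Q).comp (1 + X) = descPochhammer ℝ n - Q := by
    rw [sub_comp, descPochhammer_comp_one_add_X, hQ]
    ring
  have hconst := eq_C_eval_zero_of_comp_one_add_X hperiodic
  have hmean : (descPochhammer ℝ n - Q).eval 0 = bernoulliStar n := by
    calc (descPochhammer ℝ n - Q).eval 0
        = ∫ x in (0 : ℝ)..1, (descPochhammer ℝ n - Q).eval x := by rw [hconst]; simp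
      _ = bernoulliStar n - ∫ x in (0 : ℝ)..1, Q.eval x := by
        simp only [eval_sub]
        exact intervalIntegral.integral_sub ((Polynomial.continuous _).intervalIntegrable 0 1)
          ((Polynomial.continuous _).intervalIntegrable 0 1)
      _ = bernoulliStar n := by
        rw [integral_eval_sum_C_mul_bernoulli (by simp), sub_zero]
  rw [← hmean, ← hconst, sub_add_cancel]
end

section
/- For all nonnegative integers n, the Bernoulli number satisfies B_n = sum_{i=0}^{n} (-1)^i * (i! / (i+1)) * S(n, i). -/
open Finset

/-! The Bernoulli numbers are the unique sequence with `∑_{k<n} C(n,k) B_k = [n = 1]`, so it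
suffices to check this recursion for `T_n = ∑_i (-1)^i i!/(i+1) S(n,i)`. Swapping the sums and
using `∑_k C(m,k) S(k,i) = S(m+1,i+1)` turns `∑_{k≤n} C(n+1,k) T_k` into
`∑_i (-1)^i i!/(i+1) S(n+2,i+1)`; the recurrence `S(n+2,i+1) = S(n+1,i) + (i+1) S(n+1,i+1)` splits
this into `T_{n+1}` plus the telescoping sum `∑_i (-1)^i i! S(n+1,i+1) = S(n,0) = [n = 0]`. -/

open scoped Nat

theorem stirling2_eq_stirlingSecond_s6 : stirling2 = Nat.stirlingSecond := by
  funext n k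
  induction n generalizing k with
  | zero => cases k <;> rfl
  | succ n ih =>
    cases k with
    | zero => rfl
    | succ k => rw [stirling2, Nat.stirlingSecond_succ_succ, ih, ih, add_comm]

theorem Finset.sum_range_succ_choose_mul {M : Type*} [AddCommMonoid M] (m : ℕ) (f : ℕ → M) :
    ∑ k ∈ range (m + 2), (m + 1).choose k • f k =
      ∑ k ∈ range (m + 1), m.choose k • f k + ∑ k ∈ range (m + 1), m.choose k • f (k + 1) := by
  simp only [sum_range_succ' _ (m + 1), sum_range_succ' (fun k => m.choose k • f k) m,
    Nat.choose_succ_succ, add_smul, sum_add_distrib, Nat.choose_zero_right]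
  rw [sum_range_succ (fun k => m.choose (k + 1) • f (k + 1)), Nat.choose_succ_self, zero_smul,
    add_zero]
  abel

namespace Nat

theorem sum_choose_mul_stirlingSecond (m i : ℕ) :
    ∑ k ∈ range (m + 1), m.choose k * stirlingSecond k i = stirlingSecond (m + 1) (i + 1) := by
  induction m generalizing i with
  | zero => simp [stirlingSecond_succ_succ, stirlingSecond_eq_zero_of_lt]
  | succ m ih =>
    simp only [← smul_eq_mul, sum_range_succ_choose_mul] at ih ⊢
    simp only [smul_eq_mul] at ih ⊢
    rw [ih]
    cases i with
    | zero => simp [stirlingSecond_one_right]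
    | succ j =>
      have split (k : ℕ) : m.choose k * stirlingSecond (k + 1) (j + 1) =
          (j + 1) * (m.choose k * stirlingSecond k (j + 1)) + m.choose k * stirlingSecond k j := by
        rw [stirlingSecond_succ_succ]; ring
      simp only [split, sum_add_distrib, ← mul_sum, ih, stirlingSecond_succ_succ (m + 1)]
      ring

theorem sum_neg_one_pow_mul_factorial_mul_stirlingSecond_succ {R : Type*} [CommRing R]
    {m N : ℕ} (hN : m < N) :
    ∑ i ∈ range N, (-1 : R) ^ i * i ! * stirlingSecond (m + 1) (i + 1) =
      if m = 0 then 1 else 0 := by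
  set f : ℕ → R := fun i => (-1 : R) ^ i * i ! * stirlingSecond m i
  have telescope (i : ℕ) :
      (-1 : R) ^ i * i ! * stirlingSecond (m + 1) (i + 1) = f i - f (i + 1) := by
    simp only [f, stirlingSecond_succ_succ, pow_succ, factorial_succ]
    push_cast
    ring
  simp only [telescope, sum_range_sub', f, stirlingSecond_eq_zero_of_lt hN]
  cases m <;> simp

end Nat

theorem eq_bernoulli_of_sum_choose_mul {f : ℕ → ℚ}
    (hf : ∀ n, ∑ k ∈ range n, (n.choose k : ℚ) * f k = if n = 1 then 1 else 0) (n : ℕ) :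
    f n = bernoulli n := by
  induction n using Nat.strong_induction_on with
  | _ n ih =>
    have h := hf (n + 1)
    rw [← sum_bernoulli, sum_range_succ, sum_range_succ,
      sum_congr rfl fun k hk => by rw [ih k (mem_range.mp hk)], add_right_inj] at h
    exact mul_left_cancel₀ (Nat.cast_ne_zero.mpr (Nat.choose_pos n.le_succ).ne') h

def stirlingBernoulli (n : ℕ) : ℚ :=
  ∑ i ∈ range (n + 1), (-1 : ℚ) ^ i * (i ! : ℚ) / (i + 1) * Nat.stirlingSecond n i

theorem stirlingBernoulli_eq_sum_range {n N : ℕ} (hN : n < N) :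
    stirlingBernoulli n =
      ∑ i ∈ range N, (-1 : ℚ) ^ i * (i ! : ℚ) / (i + 1) * Nat.stirlingSecond n i := by
  refine sum_subset (range_subset_range.mpr hN) fun i _ hi => ?_
  rw [Nat.stirlingSecond_eq_zero_of_lt (by simpa using hi), Nat.cast_zero, mul_zero]

theorem sum_choose_mul_stirlingBernoulli (n : ℕ) :
    ∑ k ∈ range n, (n.choose k : ℚ) * stirlingBernoulli k = if n = 1 then 1 else 0 := by
  cases n with
  | zero => simp
  | succ n =>
    set c : ℕ → ℚ := fun i => (-1 : ℚ) ^ i * (i ! : ℚ) / (i + 1)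
    have full : ∑ k ∈ range (n + 2), ((n + 1).choose k : ℚ) * stirlingBernoulli k =
        stirlingBernoulli (n + 1) + if n = 0 then 1 else 0 := by
      calc _ = ∑ k ∈ range (n + 2), ∑ i ∈ range (n + 2),
              ((n + 1).choose k : ℚ) * (c i * Nat.stirlingSecond k i) :=
            sum_congr rfl fun k hk => by
              rw [stirlingBernoulli_eq_sum_range (mem_range.mp hk), mul_sum]
        _ = ∑ i ∈ range (n + 2), c i * Nat.stirlingSecond (n + 2) (i + 1) := by
            rw [sum_comm]
            refine sum_congr rfl fun i _ => ?_
            rw [← Nat.sum_choose_mul_stirlingSecond, Nat.cast_sum, mul_sum]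
            exact sum_congr rfl fun k _ => by push_cast; ring
        _ = ∑ i ∈ range (n + 2), c i * Nat.stirlingSecond (n + 1) i +
              ∑ i ∈ range (n + 2), (-1 : ℚ) ^ i * i ! * Nat.stirlingSecond (n + 1) (i + 1) := by
            rw [← sum_add_distrib]
            refine sum_congr rfl fun i _ => ?_
            rw [Nat.stirlingSecond_succ_succ]
            simp only [c]
            push_cast
            field_simp
            ring
        _ = _ := by
            rw [← stirlingBernoulli_eq_sum_range n.succ.lt_succ_self,
              Nat.sum_neg_one_pow_mul_factorial_mul_stirlingSecond_succ (by omega)]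
    rw [sum_range_succ, Nat.choose_self, Nat.cast_one, one_mul, add_comm, add_right_inj] at full
    simpa using full

theorem stmt6 (n : ℕ) :
    bernoulli n =
      ∑ i ∈ Finset.range (n + 1), (-1 : ℚ) ^ i * (i.factorial : ℚ) / (i + 1) * stirling2 n i := by
  rw [stirling2_eq_stirlingSecond_s6]
  exact (eq_bernoulli_of_sum_choose_mul sum_choose_mul_stirlingBernoulli n).symm
end

section
/- For all nonnegative integers n, sum_{k=0}^{n} s(n, k)/(k+2) = n * B_n^* + B_{n+1}^*. -/
open Finset

lemma stirling1_eq_zero : ∀ n k : ℕ, n < k → stirling1 n k = 0 := by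
  intro n
  induction n with
  | zero => intro k hk; cases k with | zero => omega | succ k => rfl
  | succ n ih =>
    intro k hk
    cases k with
    | zero => omega
    | succ k =>
      rw [stirling1, ih k (by omega), ih (k+1) (by omega)]
      ring

lemma eval_desc (n : ℕ) (x : ℝ) :
    (descPochhammer ℝ n).eval x = ∑ k ∈ range (n+1), (stirling1 n k : ℝ) * x ^ k := by
  induction n with
  | zero => simp [stirling1, descPochhammer]
  | succ n ih =>
    rw [descPochhammer_succ_right]
    simp only [Polynomial.eval_mul, Polynomial.eval_sub, Polynomial.eval_X,
      Polynomial.eval_natCast, ih]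
    have h1 : ∑ k ∈ range (n+2), (stirling1 (n+1) k : ℝ) * x ^ k
        = ∑ k ∈ range (n+1), (stirling1 (n+1) (k+1) : ℝ) * x ^ (k+1)
          + (stirling1 (n+1) 0 : ℝ) * x ^ 0 := Finset.sum_range_succ' _ _
    have h2 : ∑ k ∈ range (n+2), (stirling1 n k : ℝ) * x ^ k
        = ∑ k ∈ range (n+1), (stirling1 n (k+1) : ℝ) * x ^ (k+1)
          + (stirling1 n 0 : ℝ) * x ^ 0 := Finset.sum_range_succ' _ _
    have h3 : ∑ k ∈ range (n+2), (stirling1 n k : ℝ) * x ^ k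
        = ∑ k ∈ range (n+1), (stirling1 n k : ℝ) * x ^ k := by
      rw [Finset.sum_range_succ, stirling1_eq_zero n (n+1) (by omega)]
      simp
    rw [h1]
    simp only [stirling1]
    push_cast
    have h4 : ∑ k ∈ range (n+1), ((stirling1 n k : ℝ)) * x ^ (k+1)
        = (∑ k ∈ range (n+1), (stirling1 n k : ℝ) * x ^ k) * x := by
      rw [Finset.sum_mul]; exact Finset.sum_congr rfl (fun k _ => by ring)
    have h5 : ∑ k ∈ range (n+1), ((n:ℝ) * (stirling1 n (k+1) : ℝ)) * x ^ (k+1)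
        = (n:ℝ) * ∑ k ∈ range (n+1), (stirling1 n (k+1) : ℝ) * x ^ (k+1) := by
      rw [Finset.mul_sum]; exact Finset.sum_congr rfl (fun k _ => by ring)
    have h6 : ∑ k ∈ range (n+1), ((stirling1 n k : ℝ) - (n:ℝ) * (stirling1 n (k+1) : ℝ)) * x ^ (k+1)
        = ∑ k ∈ range (n+1), (stirling1 n k : ℝ) * x ^ (k+1)
          - (n:ℝ) * ∑ k ∈ range (n+1), (stirling1 n (k+1) : ℝ) * x ^ (k+1) := by
      rw [Finset.mul_sum, ← Finset.sum_sub_distrib]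
      exact Finset.sum_congr rfl (fun k _ => by ring)
    have h7 : ∑ k ∈ range (n+1), (stirling1 n (k+1) : ℝ) * x ^ (k+1) + (stirling1 n 0 : ℝ) * x ^ 0
        = ∑ k ∈ range (n+1), (stirling1 n k : ℝ) * x ^ k := by rw [← h2, h3]
    rw [h6, h4]
    linear_combination (n:ℝ) * h7

theorem stmt15 (n : ℕ) :
    ∑ k ∈ Finset.range (n + 1), (stirling1 n k : ℝ) / (k + 2) =
      (n : ℝ) * bernoulliStar n + bernoulliStar (n + 1) := by
  have hi : ∀ m : ℕ, IntervalIntegrable (fun x => (descPochhammer ℝ m).eval x)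
      MeasureTheory.volume 0 1 :=
    fun m => ((descPochhammer ℝ m).continuous_aeval).intervalIntegrable _ _
  have key : ∀ x : ℝ, x * (descPochhammer ℝ n).eval x
      = (descPochhammer ℝ (n+1)).eval x + (n:ℝ) * (descPochhammer ℝ n).eval x := by
    intro x
    rw [descPochhammer_succ_right]
    simp only [Polynomial.eval_mul, Polynomial.eval_sub, Polynomial.eval_X,
      Polynomial.eval_natCast]
    ring
  have h1 : ∀ k ∈ Finset.range (n+1), (stirling1 n k : ℝ)/(k+2)
      = ∫ x in (0:ℝ)..1, (stirling1 n k : ℝ) * x ^ (k+1) := by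
    intro k _
    rw [intervalIntegral.integral_const_mul, integral_pow]
    push_cast
    ring
  calc ∑ k ∈ Finset.range (n + 1), (stirling1 n k : ℝ) / (k + 2)
      = ∑ k ∈ Finset.range (n+1), ∫ x in (0:ℝ)..1, (stirling1 n k : ℝ) * x ^ (k+1) :=
        Finset.sum_congr rfl h1
    _ = ∫ x in (0:ℝ)..1, ∑ k ∈ Finset.range (n+1), (stirling1 n k : ℝ) * x ^ (k+1) :=
        (intervalIntegral.integral_finset_sum (fun k _ =>
          ((continuous_const.mul (continuous_pow (k+1))).intervalIntegrable _ _))).symm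
    _ = ∫ x in (0:ℝ)..1, x * (descPochhammer ℝ n).eval x := by
        apply intervalIntegral.integral_congr
        intro x _
        dsimp only
        rw [eval_desc, Finset.mul_sum]
        exact Finset.sum_congr rfl (fun k _ => by ring)
    _ = ∫ x in (0:ℝ)..1, ((descPochhammer ℝ (n+1)).eval x + (n:ℝ) * (descPochhammer ℝ n).eval x) := by
        apply intervalIntegral.integral_congr
        intro x _
        exact key x
    _ = (n : ℝ) * bernoulliStar n + bernoulliStar (n + 1) := by
        rw [intervalIntegral.integral_add (hi (n+1)) ((hi n).const_mul _),
          intervalIntegral.integral_const_mul]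
        unfold bernoulliStar
        ring
end

section
/- For every positive integer r and nonnegative integer n, the integral from 0 to 1 of x^(n) * x^{r-1} dx equals sum_{k=0}^{r-1} (sum_{l=0}^{r-1-k} binom(r-1,l) * S(r-1-l, k) * n^l) * B_{n+k}^*, where x^(n) is the falling factorial x(x-1)...(x-n+1). -/
open Finset

lemma stirling2_eq_zero : ∀ {m k : ℕ}, m < k → stirling2 m k = 0 := by
  intro m
  induction m with
  | zero => intro k h; cases k with
    | zero => omega
    | succ k => rfl
  | succ m ih =>
    intro k h
    cases k with
    | zero => omega
    | succ k =>
      rw [stirling2, ih (by omega), ih (by omega), mul_zero]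
      omega

lemma descPoch_mul (n k : ℕ) (x : ℝ) :
    (descPochhammer ℝ n).eval x * (descPochhammer ℝ k).eval (x - n) =
    (descPochhammer ℝ (n + k)).eval x := by
  induction k with
  | zero => simp
  | succ k ih =>
    rw [descPochhammer_succ_right, show n + (k+1) = (n+k)+1 from rfl,
      descPochhammer_succ_right]
    simp only [Polynomial.eval_mul, Polynomial.eval_sub, Polynomial.eval_X,
      Polynomial.eval_natCast]
    rw [← ih]
    push_cast
    ring

lemma key_mul (k : ℕ) (y : ℝ) : y * (descPochhammer ℝ k).eval y =
    (descPochhammer ℝ (k+1)).eval y + k * (descPochhammer ℝ k).eval y := by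
  rw [descPochhammer_succ_right]
  simp only [Polynomial.eval_mul, Polynomial.eval_sub, Polynomial.eval_X,
    Polynomial.eval_natCast]
  ring

lemma pow_eq_sum_stirling (m : ℕ) (y : ℝ) :
    y ^ m = ∑ k ∈ range (m+1), (stirling2 m k : ℝ) * (descPochhammer ℝ k).eval y := by
  induction m with
  | zero => simp [stirling2]
  | succ m ih =>
    have h1 : y ^ (m+1) = ∑ k ∈ range (m+1),
        ((stirling2 m k : ℝ) * (descPochhammer ℝ (k+1)).eval y
          + (stirling2 m k : ℝ) * (k * (descPochhammer ℝ k).eval y)) := by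
      calc y ^ (m+1) = y * y ^ m := by ring
        _ = ∑ k ∈ range (m+1), (stirling2 m k : ℝ) *
            (y * (descPochhammer ℝ k).eval y) := by
            rw [ih, Finset.mul_sum]; exact Finset.sum_congr rfl fun k _ => by ring
        _ = _ := Finset.sum_congr rfl fun k _ => by rw [key_mul]; ring
    rw [h1, Finset.sum_add_distrib]
    have h2 : ∑ k ∈ range (m+1), (stirling2 m k : ℝ) * (k * (descPochhammer ℝ k).eval y)
        = ∑ k ∈ range (m+1), ((k+1 : ℕ) : ℝ) * (stirling2 m (k+1) : ℝ) *
            (descPochhammer ℝ (k+1)).eval y := by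
      rw [Finset.sum_range_succ'  (fun k => (stirling2 m k : ℝ) * (k * (descPochhammer ℝ k).eval y)) m,
        Finset.sum_range_succ]
      simp [stirling2_eq_zero (Nat.lt_succ_self m)]
      exact Finset.sum_congr rfl fun k _ => by ring
    rw [h2, ← Finset.sum_add_distrib,
      Finset.sum_range_succ' (fun k => (stirling2 (m+1) k : ℝ) * (descPochhammer ℝ k).eval y) (m+1)]
    simp only [stirling2, Nat.cast_add, Nat.cast_mul]
    norm_num
    exact Finset.sum_congr rfl fun k _ => by ring

lemma main_pt (m n : ℕ) (x : ℝ) :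
    (descPochhammer ℝ n).eval x * x ^ m =
    ∑ k ∈ range (m+1), (∑ l ∈ range (m+1-k), (m.choose l : ℝ) * (stirling2 (m - l) k : ℝ) * (n:ℝ)^l) *
      (descPochhammer ℝ (n+k)).eval x := by
  have hx : x ^ m = ∑ l ∈ range (m+1), ((n:ℝ))^l * (x - n)^(m-l) * (m.choose l : ℝ) := by
    have := add_pow (n:ℝ) (x - n) m
    rw [show (n:ℝ) + (x - n) = x by ring] at this
    rw [this]
  have hexp : ∀ l ∈ range (m+1), (x - (n:ℝ))^(m-l) =
      ∑ k ∈ range (m+1), (stirling2 (m-l) k : ℝ) * (descPochhammer ℝ k).eval (x - n) := by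
    intro l hl
    rw [pow_eq_sum_stirling]
    apply Finset.sum_subset
    · exact Finset.range_subset_range.mpr (by omega)
    · intro k _ hk
      rw [stirling2_eq_zero (by simp at hk ⊢; omega), Nat.cast_zero, zero_mul]
  calc (descPochhammer ℝ n).eval x * x ^ m
      = ∑ l ∈ range (m+1), ∑ k ∈ range (m+1),
          (m.choose l : ℝ) * (stirling2 (m-l) k : ℝ) * (n:ℝ)^l *
            ((descPochhammer ℝ n).eval x * (descPochhammer ℝ k).eval (x - n)) := by
        rw [hx, Finset.mul_sum]
        refine Finset.sum_congr rfl fun l hl => ?_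
        rw [hexp l hl]
        simp only [Finset.mul_sum, Finset.sum_mul]
        exact Finset.sum_congr rfl fun k _ => by ring
    _ = ∑ k ∈ range (m+1), ∑ l ∈ range (m+1),
          (m.choose l : ℝ) * (stirling2 (m-l) k : ℝ) * (n:ℝ)^l *
            (descPochhammer ℝ (n+k)).eval x := by
        rw [Finset.sum_comm]
        exact Finset.sum_congr rfl fun k _ => Finset.sum_congr rfl fun l _ => by
          rw [descPoch_mul]
    _ = _ := by
        refine Finset.sum_congr rfl fun k hk => ?_
        rw [Finset.sum_mul]
        have hz : ∀ l ∈ range (m+1), l ∉ range (m+1-k) →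
            (m.choose l : ℝ) * (stirling2 (m-l) k : ℝ) * (n:ℝ)^l *
              (descPochhammer ℝ (n+k)).eval x = 0 := by
          intro l hl hl'
          simp only [Finset.mem_range] at hl hl'
          rw [stirling2_eq_zero (show m - l < k by omega)]
          simp
        rw [← Finset.sum_subset (Finset.range_subset_range.mpr (show m+1-k ≤ m+1 by omega)) hz]

theorem stmt17 (r : ℕ) (hr : 0 < r) (n : ℕ) :
    (∫ x in (0:ℝ)..1, (descPochhammer ℝ n).eval x * x ^ (r - 1)) =
      ∑ k ∈ Finset.range r,
        (∑ l ∈ Finset.range (r - k), ((r - 1).choose l : ℝ) * (stirling2 (r - 1 - l) k : ℝ) * (n : ℝ) ^ l) *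
          bernoulliStar (n + k) := by
  obtain ⟨m, rfl⟩ : ∃ m, r = m + 1 := ⟨r - 1, by omega⟩
  simp only [Nat.add_sub_cancel]
  have h1 : (∫ x in (0:ℝ)..1, (descPochhammer ℝ n).eval x * x ^ m) =
      ∫ x in (0:ℝ)..1, ∑ k ∈ range (m+1),
        (∑ l ∈ range (m+1-k), (m.choose l : ℝ) * (stirling2 (m - l) k : ℝ) * (n:ℝ)^l) *
          (descPochhammer ℝ (n+k)).eval x := by
    apply intervalIntegral.integral_congr
    intro x _
    exact main_pt m n x
  rw [h1, intervalIntegral.integral_finset_sum]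
  · refine Finset.sum_congr rfl fun k _ => ?_
    rw [intervalIntegral.integral_const_mul]
    rfl
  · intro k _
    exact (continuous_const.mul ((descPochhammer ℝ (n+k)).continuous)).intervalIntegrable 0 1
end
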